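/- (When the malicious agent measures 1, the receiver's qubit collapses to |0⟩ and the message is destroyed, not leaked.) Let |Φ⟩₁ ∈ EuclideanSpace ℂ (Fin 4 → ZMod 2) be the state obtained by applying CNOT (control s₁, target s₂) and then Hadamard on s₁ to (α|0⟩ + β|1⟩) ⊗ W₃, with qubits ordered (s₁, s₂, r, m) and α, β ∈ ℂ. Then the component of |Φ⟩₁ supported on bitstrings with m-bit equal to 1 is exactly (1/√6)(α|00⟩ + β|01⟩ + α|10⟩ − β|11⟩)_{s₁s₂} ⊗ |0⟩_r ⊗ |1⟩_m; in particular this component is a product state across the cut (s₁s₂ | r | m) in which the receiver's qubit r is in the state |0⟩ regardless of α and β. -/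

import Mathlib

/-- Amplitude of the 3-qubit W state at bitstring `(a, b, c)`. -/
noncomputable def w3amp (a b c : ZMod 2) : ℂ :=
  if (a = 1 ∧ b = 0 ∧ c = 0) ∨ (a = 0 ∧ b = 1 ∧ c = 0) ∨ (a = 0 ∧ b = 0 ∧ c = 1)
  then ((1 / Real.sqrt 3 : ℝ) : ℂ) else 0

/-- The joint state `φ ⊗ W₃` with `φ = α|0⟩ + β|1⟩` on qubit `s₁ = 0` and the
3-qubit W state on qubits `(s₂, r, m) = (1, 2, 3)`. -/
noncomputable def jointState (α β : ℂ) : EuclideanSpace ℂ (Fin 4 → ZMod 2) :=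
  WithLp.toLp 2 (fun x => (if x 0 = 0 then α else β) * w3amp (x 1) (x 2) (x 3))

/-- CNOT with control qubit `0` and target qubit `1` (a self-inverse basis permutation). -/
noncomputable def cnot01 (ψ : EuclideanSpace ℂ (Fin 4 → ZMod 2)) :
    EuclideanSpace ℂ (Fin 4 → ZMod 2) :=
  WithLp.toLp 2 (fun x => ψ (Function.update x 1 (x 1 + x 0)))

/-- Hadamard gate on qubit `0`. -/
noncomputable def had0 (ψ : EuclideanSpace ℂ (Fin 4 → ZMod 2)) :
    EuclideanSpace ℂ (Fin 4 → ZMod 2) :=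
  WithLp.toLp 2 (fun x => ((1 / Real.sqrt 2 : ℝ) : ℂ) *
    (ψ (Function.update x 0 0) + (if x 0 = 0 then 1 else -1) * ψ (Function.update x 0 1)))

/-- The state `|Φ⟩₁` obtained by applying CNOT (control `s₁`, target `s₂`) and then
Hadamard on `s₁` to `(α|0⟩ + β|1⟩) ⊗ W₃`. -/
noncomputable def Phi1 (α β : ℂ) : EuclideanSpace ℂ (Fin 4 → ZMod 2) :=
  had0 (cnot01 (jointState α β))

/-- Computational-basis vector `|b₀b₁b₂b₃⟩`. -/
noncomputable def ket4 (b0 b1 b2 b3 : ZMod 2) : EuclideanSpace ℂ (Fin 4 → ZMod 2) :=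
  EuclideanSpace.single ![b0, b1, b2, b3] 1

/-! Since W₃ has a single excitation, measuring m = 1 forces the other two W-qubits, s₂ (before the
CNOT) and r, to 0; so r ends in |0⟩ and only the sender register carries α and β. -/

lemma ZMod.two_eq_zero_or_one (a : ZMod 2) : a = 0 ∨ a = 1 := by
  revert a; decide

lemma w3amp_of_last_eq_one (a b : ZMod 2) :
    w3amp a b 1 = if a = 0 ∧ b = 0 then ((1 / Real.sqrt 3 : ℝ) : ℂ) else 0 := by
  rcases ZMod.two_eq_zero_or_one a with rfl | rfl <;>
    rcases ZMod.two_eq_zero_or_one b with rfl | rfl <;> simp [w3amp]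

lemma Phi1_apply (α β : ℂ) (x : Fin 4 → ZMod 2) :
    Phi1 α β x = ((1 / Real.sqrt 2 : ℝ) : ℂ) *
      (α * w3amp (x 1) (x 2) (x 3) +
        (if x 0 = 0 then 1 else -1) * (β * w3amp (x 1 + 1) (x 2) (x 3))) := by
  simp [Phi1, had0, cnot01, jointState]

/-- Amplitudes of `α|00⟩ + β|01⟩ + α|10⟩ − β|11⟩` on the qubits `(s₁, s₂)`. -/
def senderAmp (α β : ℂ) (a b : ZMod 2) : ℂ :=
  if b = 0 then α else (if a = 0 then 1 else -1) * β

lemma inv_sqrt_two_mul_inv_sqrt_three :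
    ((1 / Real.sqrt 2 : ℝ) : ℂ) * ((1 / Real.sqrt 3 : ℝ) : ℂ) = ((1 / Real.sqrt 6 : ℝ) : ℂ) := by
  rw [← Complex.ofReal_mul, div_mul_div_comm, ← Real.sqrt_mul zero_le_two]
  norm_num

lemma Phi1_apply_of_last_eq_one (α β : ℂ) (x : Fin 4 → ZMod 2) (hx : x 3 = 1) :
    Phi1 α β x = ((1 / Real.sqrt 6 : ℝ) : ℂ) * senderAmp α β (x 0) (x 1) *
      (if x 2 = 0 then 1 else 0) := by
  rw [Phi1_apply, hx, w3amp_of_last_eq_one, w3amp_of_last_eq_one,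
    ← inv_sqrt_two_mul_inv_sqrt_three]
  rcases ZMod.two_eq_zero_or_one (x 1) with h1 | h1 <;>
    rcases ZMod.two_eq_zero_or_one (x 2) with h2 | h2 <;>
    simp +decide [senderAmp, h1, h2] <;> ring_nf

lemma ket4_apply (b₀ b₁ b₂ b₃ : ZMod 2) (x : Fin 4 → ZMod 2) :
    ket4 b₀ b₁ b₂ b₃ x = if x 0 = b₀ ∧ x 1 = b₁ ∧ x 2 = b₂ ∧ x 3 = b₃ then 1 else 0 := by
  have : x = ![b₀, b₁, b₂, b₃] ↔ x 0 = b₀ ∧ x 1 = b₁ ∧ x 2 = b₂ ∧ x 3 = b₃ := by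
    simp [funext_iff, Fin.forall_fin_succ]
  simp [ket4, PiLp.single_apply, this]

theorem stmt11 (α β : ℂ) :
    ((WithLp.toLp 2 (fun x : Fin 4 → ZMod 2 => if x 3 = 1 then Phi1 α β x else 0) :
        EuclideanSpace ℂ (Fin 4 → ZMod 2)) =
      ((1 / Real.sqrt 6 : ℝ) : ℂ) •
        (α • ket4 0 0 0 1 + β • ket4 0 1 0 1 + α • ket4 1 0 0 1 - β • ket4 1 1 0 1)) ∧
    ∃ f : ZMod 2 → ZMod 2 → ℂ, ∀ x : Fin 4 → ZMod 2,
      (if x 3 = 1 then Phi1 α β x else 0) =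
        f (x 0) (x 1) * (if x 2 = 0 then 1 else 0) * (if x 3 = 1 then 1 else 0) := by
  have component (x : Fin 4 → ZMod 2) :
      (if x 3 = 1 then Phi1 α β x else 0) =
        ((1 / Real.sqrt 6 : ℝ) : ℂ) * senderAmp α β (x 0) (x 1) *
          (if x 2 = 0 then 1 else 0) * (if x 3 = 1 then 1 else 0) := by
    by_cases h3 : x 3 = 1
    · simp [h3, Phi1_apply_of_last_eq_one α β x h3]
    · simp [h3]
  refine ⟨?_, fun a b => ((1 / Real.sqrt 6 : ℝ) : ℂ) * senderAmp α β a b, component⟩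
  ext x
  rw [WithLp.ofLp_toLp, component]
  simp only [PiLp.smul_apply, PiLp.add_apply, PiLp.sub_apply, ket4_apply, smul_eq_mul]
  rcases ZMod.two_eq_zero_or_one (x 0) with h0 | h0 <;>
    rcases ZMod.two_eq_zero_or_one (x 1) with h1 | h1 <;>
    rcases ZMod.two_eq_zero_or_one (x 2) with h2 | h2 <;>
    rcases ZMod.two_eq_zero_or_one (x 3) with h3 | h3 <;>
    simp [senderAmp, h0, h1, h2, h3]
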